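/- arXiv:2110.02333 — 2 statements merged into one kernel-verified Lean document; each statement's English description precedes it below -/
import Mathlib

section
/- Let U be Haar-uniform on O(N₁) and S a fixed diagonal matrix. Then Var[Σₐ (U_{ka}Sₐₐ)²] ≤ C (‖S‖₄⁴ + ‖S‖₂⁴/N₁) / N₁² for a universal constant C, where ‖S‖_p denotes the ℓ^p norm of the diagonal entries. -/
open MeasureTheory ProbabilityTheory

noncomputable instance matrixMeasurableSpace (m n : Type*) :
    MeasurableSpace (Matrix m n ℝ) :=
  inferInstanceAs (MeasurableSpace (m → n → ℝ))

def IsHaarOrthogonal {n : ℕ} (μ : Measure (Matrix (Fin n) (Fin n) ℝ)) : Prop :=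
  IsProbabilityMeasure μ ∧
  (∀ᵐ U ∂μ, U ∈ Matrix.orthogonalGroup (Fin n) ℝ) ∧
  (∀ Q ∈ Matrix.orthogonalGroup (Fin n) ℝ,
    MeasurePreserving (fun U => Q * U) μ μ ∧ MeasurePreserving (fun U => U * Q) μ μ)

/-! Let `x` be the `k`-th row of the Haar matrix. Every unit vector `u` is the `a`-th column of
an orthogonal matrix (a reflection), so right invariance makes `x ⬝ᵥ u` equidistributed with `x a`.
Taking `u = e_b` makes the moments of `x` symmetric in the coordinates; taking
`u = (e_a ± e_b)/√2` gives `E x_a⁴ = 3 E x_a² x_b²`. Together with `|x|² = 1` this pins down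
`E x_a² = 1/N` and `E x_a² x_b² = (1 + 2 δ_ab) / (N (N + 2))`, whence
`Var (∑ w_a x_a²) = 2 (N ∑ w_a² - (∑ w_a)²) / (N² (N + 2)) ≤ 2 ∑ w_a² / N²`; take `w_a = d_a²`. -/

open Matrix

theorem exists_mem_orthogonalGroup_transpose_apply_eq {n : Type*} [Fintype n] [DecidableEq n]
    (a : n) {u : n → ℝ} (hu : u ⬝ᵥ u = 1) :
    ∃ Q ∈ orthogonalGroup n ℝ, Qᵀ a = u := by
  let v : EuclideanSpace ℝ n := WithLp.toLp 2 u
  have hv : ‖EuclideanSpace.single a (1 : ℝ)‖ = ‖v‖ := by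
    rw [PiLp.norm_single, norm_one, eq_comm,
      ← pow_eq_one_iff_of_nonneg (norm_nonneg _) two_ne_zero, EuclideanSpace.real_norm_sq_eq, ← hu]
    simp [v, dotProduct, sq]
  let R := Submodule.reflection (ℝ ∙ (EuclideanSpace.single a 1 - v))ᗮ
  let b := (EuclideanSpace.basisFun n ℝ).toBasis
  refine ⟨LinearMap.toMatrix b b R.toLinearEquiv.toLinearMap, R.toMatrix_mem_unitaryGroup _ _, ?_⟩
  ext c
  simp [LinearMap.toMatrix_apply, b, R, Submodule.reflection_sub hv, v]

theorem sum_sum_mul_mul_ite_three_one {n : Type*} [Fintype n] [DecidableEq n] (w : n → ℝ) :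
    ∑ a, ∑ b, w a * w b * (if a = b then 3 else 1) = (∑ a, w a) ^ 2 + 2 * ∑ a, w a ^ 2 := by
  have hsplit (a b : n) : w a * w b * (if a = b then 3 else 1) =
      w a * w b + if a = b then 2 * w a ^ 2 else 0 := by
    split_ifs with hab
    · subst hab; ring
    · ring
  simp only [hsplit, Finset.sum_add_distrib, Finset.sum_ite_eq, Finset.mem_univ, if_true,
    ← Finset.mul_sum, sq, Finset.sum_mul_sum]

section UniformOnSphere

variable {n : Type*} [Fintype n] [DecidableEq n]

-- These properties characterize the normalized surface measure on the unit sphere.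
structure IsUniformOnSphere (ν : Measure (n → ℝ)) : Prop where
  isProbabilityMeasure : IsProbabilityMeasure ν
  ae_dotProduct_self : ∀ᵐ x ∂ν, x ⬝ᵥ x = 1
  measurePreserving_vecMul : ∀ Q ∈ orthogonalGroup n ℝ, MeasurePreserving (· ᵥ* Q) ν ν

namespace IsUniformOnSphere

variable {ν : Measure (n → ℝ)}

theorem map_dotProduct (h : IsUniformOnSphere ν) (a : n) {u : n → ℝ} (hu : u ⬝ᵥ u = 1) :
    ν.map (· ⬝ᵥ u) = ν.map (· a) := by
  obtain ⟨Q, hQ, hQa⟩ := exists_mem_orthogonalGroup_transpose_apply_eq a hu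
  have hQν := h.measurePreserving_vecMul Q hQ
  conv_rhs => rw [← hQν.map_eq, Measure.map_map (measurable_pi_apply a) hQν.measurable]
  congr 1
  funext x
  rw [← hQa]
  rfl

theorem integral_comp_dotProduct (h : IsUniformOnSphere ν) (a : n) {u : n → ℝ}
    (hu : u ⬝ᵥ u = 1) {f : ℝ → ℝ} (hf : Continuous f) :
    ∫ x, f (x ⬝ᵥ u) ∂ν = ∫ x, f (x a) ∂ν := by
  calc ∫ x, f (x ⬝ᵥ u) ∂ν = ∫ y, f y ∂(ν.map (· ⬝ᵥ u)) :=
        (integral_map (continuous_id.dotProduct continuous_const).measurable.aemeasurable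
          hf.aestronglyMeasurable).symm
    _ = ∫ x, f (x a) ∂ν := by
      rw [h.map_dotProduct a hu,
        integral_map (measurable_pi_apply a).aemeasurable hf.aestronglyMeasurable]

theorem integral_comp_apply_eq (h : IsUniformOnSphere ν) (a b : n) {f : ℝ → ℝ}
    (hf : Continuous f) : ∫ x, f (x b) ∂ν = ∫ x, f (x a) ∂ν := by
  simpa using h.integral_comp_dotProduct a (u := Pi.single b 1) (by simp) hf

theorem integral_comp_mul_add_mul (h : IsUniformOnSphere ν) {a b : n} (hab : a ≠ b) {s t : ℝ}
    (hst : s * s + t * t = 1) {f : ℝ → ℝ} (hf : Continuous f) :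
    ∫ x, f (x a * s + x b * t) ∂ν = ∫ x, f (x a) ∂ν := by
  have := h.integral_comp_dotProduct a (u := Pi.single a s + Pi.single b t)
    (by simpa [hab, hab.symm] using hst) hf
  simpa only [dotProduct_add, dotProduct_single] using this

theorem ae_mem_closedBall (h : IsUniformOnSphere ν) :
    ∀ᵐ x ∂ν, x ∈ Metric.closedBall (0 : n → ℝ) 1 := by
  filter_upwards [h.ae_dotProduct_self] with x hx
  rw [mem_closedBall_zero_iff, pi_norm_le_iff_of_nonneg zero_le_one]
  intro c
  rw [Real.norm_eq_abs, abs_le_one_iff_mul_self_le_one, ← hx]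
  exact Finset.single_le_sum (f := fun c => x c * x c) (fun c _ => mul_self_nonneg _)
    (Finset.mem_univ c)

theorem memLp (h : IsUniformOnSphere ν) {g : (n → ℝ) → ℝ} (hg : Continuous g) (p : ENNReal) :
    MemLp g p ν := by
  have := h.isProbabilityMeasure
  obtain ⟨C, hC⟩ := (isCompact_closedBall (0 : n → ℝ) 1).exists_bound_of_continuousOn
    hg.continuousOn
  exact .of_bound hg.aestronglyMeasurable C (h.ae_mem_closedBall.mono hC)

theorem integrable (h : IsUniformOnSphere ν) {g : (n → ℝ) → ℝ} (hg : Continuous g) :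
    Integrable g ν :=
  memLp_one_iff_integrable.1 (h.memLp hg 1)

theorem nonempty (h : IsUniformOnSphere ν) : Nonempty n := by
  have := h.isProbabilityMeasure
  obtain ⟨x, hx⟩ := h.ae_dotProduct_self.exists
  by_contra hn
  rw [not_nonempty_iff] at hn
  simp at hx

theorem sum_integral_sq (h : IsUniformOnSphere ν) : ∑ a, ∫ x, x a ^ 2 ∂ν = 1 := by
  have := h.isProbabilityMeasure
  rw [← integral_finsetSum _ fun a _ => h.integrable (by fun_prop)]
  calc ∫ x, ∑ a, x a ^ 2 ∂ν = ∫ _, (1 : ℝ) ∂ν := by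
        refine integral_congr_ae (h.ae_dotProduct_self.mono fun x hx => ?_)
        simpa [dotProduct, sq] using hx
    _ = 1 := by simp

theorem integral_sum_sum (h : IsUniformOnSphere ν) {g : n → n → (n → ℝ) → ℝ}
    (hg : ∀ a b, Continuous (g a b)) : ∫ x, ∑ a, ∑ b, g a b x ∂ν = ∑ a, ∑ b, ∫ x, g a b x ∂ν := by
  rw [integral_finsetSum _ fun a _ => integrable_finsetSum _ fun b _ => h.integrable (hg a b)]
  exact Finset.sum_congr rfl fun a _ => integral_finsetSum _ fun b _ => h.integrable (hg a b)

theorem sum_sum_integral_sq_mul_sq (h : IsUniformOnSphere ν) :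
    ∑ a, ∑ b, ∫ x, x a ^ 2 * x b ^ 2 ∂ν = 1 := by
  have := h.isProbabilityMeasure
  calc ∑ a, ∑ b, ∫ x, x a ^ 2 * x b ^ 2 ∂ν = ∫ x, ∑ a, ∑ b, x a ^ 2 * x b ^ 2 ∂ν :=
        (h.integral_sum_sum fun a b => by fun_prop).symm
    _ = ∫ _, (1 : ℝ) ∂ν := by
        refine integral_congr_ae (h.ae_dotProduct_self.mono fun x hx => ?_)
        simp only [dotProduct, ← sq] at hx
        simp [← Finset.sum_mul_sum, hx]
    _ = 1 := by simp

theorem integral_sq (h : IsUniformOnSphere ν) (a : n) :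
    ∫ x, x a ^ 2 ∂ν = 1 / Fintype.card n := by
  have hsum := h.sum_integral_sq
  simp_rw [h.integral_comp_apply_eq a _ (continuous_pow 2)] at hsum
  rw [Finset.sum_const, Finset.card_univ, nsmul_eq_mul] at hsum
  exact eq_one_div_of_mul_eq_one_right hsum


-- A rotation by `π/4` in the `(a, b)`-plane: both `(x_a ± x_b)/√2` have the law of `x_a`.
theorem integral_pow_four_eq (h : IsUniformOnSphere ν) {a b : n} (hab : a ≠ b) :
    ∫ x, x a ^ 4 ∂ν = 3 * ∫ x, x a ^ 2 * x b ^ 2 ∂ν := by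
  set r : ℝ := (√2)⁻¹
  have hr : r * r = 1 / 2 := by
    rw [← mul_inv, Real.mul_self_sqrt zero_le_two, one_div]
  have hplus := h.integral_comp_mul_add_mul hab (s := r) (t := r) (by linarith) (continuous_pow 4)
  have hminus := h.integral_comp_mul_add_mul hab (s := r) (t := -r) (by linarith)
    (continuous_pow 4)
  have hb := h.integral_comp_apply_eq a b (continuous_pow 4)
  have hpt (x : n → ℝ) : (x a * r + x b * r) ^ 4 + (x a * r + x b * -r) ^ 4
      = x a ^ 4 / 2 + 3 * (x a ^ 2 * x b ^ 2) + x b ^ 4 / 2 := by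
    linear_combination ((x a + x b) ^ 4 + (x a - x b) ^ 4) * (r * r + 1 / 2) * hr
  have key : 2 * ∫ x, x a ^ 4 ∂ν = ∫ x, x a ^ 4 ∂ν + 3 * ∫ x, x a ^ 2 * x b ^ 2 ∂ν :=
    calc 2 * ∫ x, x a ^ 4 ∂ν
        = ∫ x, (x a * r + x b * r) ^ 4 ∂ν + ∫ x, (x a * r + x b * -r) ^ 4 ∂ν := by
          rw [hplus, hminus]
          ring
      _ = ∫ x, (x a ^ 4 / 2 + 3 * (x a ^ 2 * x b ^ 2) + x b ^ 4 / 2) ∂ν := by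
          rw [← integral_add (by exact h.integrable (by fun_prop))
            (by exact h.integrable (by fun_prop))]
          simp only [hpt]
      _ = ∫ x, x a ^ 4 ∂ν + 3 * ∫ x, x a ^ 2 * x b ^ 2 ∂ν := by
          rw [integral_add (by exact h.integrable (by fun_prop))
              (by exact h.integrable (by fun_prop)),
            integral_add (by exact h.integrable (by fun_prop))
              (by exact h.integrable (by fun_prop)),
            integral_div, integral_div, integral_const_mul, hb]
          ring
  linarith

theorem integral_sq_mul_sq (h : IsUniformOnSphere ν) (a b : n) :
    ∫ x, x a ^ 2 * x b ^ 2 ∂ν =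
      (if a = b then 3 else 1) / (Fintype.card n * (Fintype.card n + 2)) := by
  obtain ⟨q, hq⟩ : ∃ q, q = (∫ x, x a ^ 4 ∂ν) / 3 := ⟨_, rfl⟩
  have hpair (c d : n) : ∫ x, x c ^ 2 * x d ^ 2 ∂ν = (if c = d then 3 else 1) * q := by
    have hc := h.integral_comp_apply_eq a c (continuous_pow 4)
    by_cases hcd : c = d
    · subst hcd
      simp only [if_true, ← pow_add, hq, ← hc]
      ring
    · rw [if_neg hcd, one_mul, hq, ← hc, h.integral_pow_four_eq hcd]
      ring
  have hcount := sum_sum_mul_mul_ite_three_one (fun _ : n => (1 : ℝ))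
  simp only [one_mul, Finset.sum_const, Finset.card_univ, nsmul_eq_mul, mul_one, one_pow] at hcount
  have hsum := h.sum_sum_integral_sq_mul_sq
  simp only [hpair, ← Finset.sum_mul, hcount] at hsum
  rw [hpair, eq_one_div_of_mul_eq_one_right hsum]
  ring

theorem variance_sum_mul_sq (h : IsUniformOnSphere ν) (w : n → ℝ) :
    variance (fun x => ∑ a, w a * x a ^ 2) ν =
      2 * (Fintype.card n * (∑ a, w a ^ 2) - (∑ a, w a) ^ 2) /
        (Fintype.card n ^ 2 * (Fintype.card n + 2)) := by
  have := h.isProbabilityMeasure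
  have hmean : ∫ x, ∑ a, w a * x a ^ 2 ∂ν = (∑ a, w a) / Fintype.card n := by
    rw [integral_finsetSum _ fun a _ => h.integrable (by fun_prop), Finset.sum_div]
    simp only [integral_const_mul, h.integral_sq, mul_one_div]
  have hsecond : ∫ x, (∑ a, w a * x a ^ 2) ^ 2 ∂ν =
      ((∑ a, w a) ^ 2 + 2 * (∑ a, w a ^ 2)) / (Fintype.card n * (Fintype.card n + 2)) := by
    have hexp (x : n → ℝ) : (∑ a, w a * x a ^ 2) ^ 2 =
        ∑ a, ∑ b, w a * w b * (x a ^ 2 * x b ^ 2) := by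
      rw [sq, Finset.sum_mul_sum]
      exact Finset.sum_congr rfl fun a _ => Finset.sum_congr rfl fun b _ => by ring
    simp only [hexp]
    rw [h.integral_sum_sum (by intros; fun_prop)]
    simp only [integral_const_mul, h.integral_sq_mul_sq, ← mul_div_assoc, ← Finset.sum_div,
      sum_sum_mul_mul_ite_three_one]
  rw [variance_eq_sub (h.memLp (by fun_prop) 2)]
  simp only [Pi.pow_apply, hmean, hsecond]
  field_simp
  ring

theorem variance_sum_mul_sq_le (h : IsUniformOnSphere ν) (w : n → ℝ) :
    variance (fun x => ∑ a, w a * x a ^ 2) ν ≤ 2 * (∑ a, w a ^ 2) / Fintype.card n ^ 2 := by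
  have := h.nonempty
  have hN : (0 : ℝ) < Fintype.card n := by exact_mod_cast Fintype.card_pos
  have hA : 0 ≤ ∑ a, w a ^ 2 := by positivity
  rw [h.variance_sum_mul_sq, div_le_div_iff₀ (by positivity) (by positivity)]
  nlinarith [sq_nonneg (∑ a, w a), mul_nonneg hA hN.le]

end IsUniformOnSphere
end UniformOnSphere

theorem dotProduct_self_row_eq_one {n : Type*} [Fintype n] [DecidableEq n] {M : Matrix n n ℝ}
    (hM : M ∈ orthogonalGroup n ℝ) (k : n) : M k ⬝ᵥ M k = 1 := by
  rw [mem_orthogonalGroup_iff] at hM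
  simpa [mul_apply'] using congrFun (congrFun hM k) k

theorem IsHaarOrthogonal.isUniformOnSphere_map_row {N : ℕ}
    {μ : Measure (Matrix (Fin N) (Fin N) ℝ)} (h : IsHaarOrthogonal μ) (k : Fin N) :
    IsUniformOnSphere (μ.map fun M => M k) := by
  obtain ⟨hprob, hmem, hinv⟩ := h
  have hrow : Measurable fun M : Matrix (Fin N) (Fin N) ℝ => M k := measurable_pi_apply k
  have hvec (Q : Matrix (Fin N) (Fin N) ℝ) : Measurable fun x : Fin N → ℝ => x ᵥ* Q :=
    (continuous_id.matrix_vecMul continuous_const).measurable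
  refine ⟨Measure.isProbabilityMeasure_map hrow.aemeasurable, ?_, fun Q hQ => ⟨?_, ?_⟩⟩
  · rw [ae_map_iff hrow.aemeasurable (measurableSet_eq_fun (by fun_prop) measurable_const)]
    exact hmem.mono fun M hM => dotProduct_self_row_eq_one hM k
  · exact hvec Q
  · have hQ' := (hinv Q hQ).2
    rw [Measure.map_map (hvec Q) hrow]
    conv_rhs => rw [← hQ'.map_eq, Measure.map_map hrow hQ'.measurable]
    rfl

/-- for `U` Haar-uniform on `O(N₁)` and a fixed diagonal `S` with
diagonal entries `d`, there is a universal constant `C > 0` such that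
`Var[∑ₐ (U_{ka} dₐ)²] ≤ C (‖d‖₄⁴ + ‖d‖₂⁴/N₁) / N₁²`. -/
theorem variance_row_contraction_bound :
    ∃ C : ℝ, 0 < C ∧ ∀ (N₁ : ℕ), 0 < N₁ →
      ∀ {Ω : Type} [inst : MeasurableSpace Ω] (P : Measure Ω),
      IsProbabilityMeasure P →
      ∀ (U : Ω → Matrix (Fin N₁) (Fin N₁) ℝ), Measurable U →
      IsHaarOrthogonal (P.map U) →
      ∀ (d : Fin N₁ → ℝ) (k : Fin N₁),
      variance (fun ω => ∑ a, (U ω k a * d a) ^ 2) P ≤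
        C * ((∑ a, (d a) ^ 4) + (∑ a, (d a) ^ 2) ^ 2 / N₁) / (N₁ : ℝ) ^ 2 := by
  refine ⟨2, two_pos, fun N₁ _ Ω _ P _ U hU hHaar d k => ?_⟩
  have hrow : Measurable fun M : Matrix (Fin N₁) (Fin N₁) ℝ => M k := measurable_pi_apply k
  have hlaw : P.map (fun ω => U ω k) = (P.map U).map fun M => M k :=
    (Measure.map_map hrow hU).symm
  calc variance (fun ω => ∑ a, (U ω k a * d a) ^ 2) P
      = variance (fun x => ∑ a, d a ^ 2 * x a ^ 2) ((P.map U).map fun M => M k) := by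
        have hf : Continuous fun x : Fin N₁ → ℝ => ∑ a, d a ^ 2 * x a ^ 2 := by fun_prop
        have hUk : Measurable fun ω => U ω k := hrow.comp hU
        rw [← hlaw, variance_map hf.measurable.aemeasurable hUk.aemeasurable]
        simp only [Function.comp_def, mul_pow, mul_comm]
    _ ≤ 2 * (∑ a, (d a ^ 2) ^ 2) / Fintype.card (Fin N₁) ^ 2 :=
        (hHaar.isUniformOnSphere_map_row k).variance_sum_mul_sq_le _
    _ ≤ _ := by
        simp only [← pow_mul, Fintype.card_fin]
        gcongr
        exact le_add_of_nonneg_right (by positivity)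
end

section
/- Let s₂, …, s_m be i.i.d. with sᵢ = |xᵢ| for standard Gaussians xᵢ, let r_t ≥ 1, and let η ≥ √((r_t−1)/(m−1)). Then the probability that both Σᵢ₌₂^m sᵢ² ≥ (r_t−1)/η² and maxᵢ sᵢ ≤ 1/η hold is at least 1 − ((r_t−1)/(η²(m−1)) · e^{1−(r_t−1)/(η²(m−1))})^{(m−1)/2} − (m−1)(1 − 2·erf(1/η)), where erf here denotes P[0 ≤ g ≤ t] for a standard Gaussian g. -/
/-!
The complement of the event is covered by the lower tail `{∑ xᵢ² < (r_t − 1)/η²}` of a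
`χ²_{m−1}` variable and the `m − 1` events `{|xᵢ| > 1/η}`. Since `E exp(t x²) = (1 − 2t)^{-1/2}`
for a standard Gaussian, the Chernoff bound with `1 − 2t = 1/z` gives the lower tail
`P[χ²_n ≤ z n] ≤ (z e^{1−z})^{n/2}` for `0 < z ≤ 1`; by symmetry of the Gaussian each
`|xᵢ| > 1/η` has probability `1 − 2 erf(1/η)`. A union bound finishes the proof.
-/

open MeasureTheory ProbabilityTheory

/-- `erf t` here denotes `P[0 ≤ g ≤ t]` for a standard Gaussian `g`. -/
noncomputable def erf (t : ℝ) : ℝ := ((gaussianReal 0 1) (Set.Icc 0 t)).toReal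

open Real

lemma ofReal_one_sub_sub_le_measure_inter {α : Type*} [MeasurableSpace α] {μ : Measure α}
    [IsProbabilityMeasure μ] {s t : Set α} {p q : ℝ} (hp : 0 ≤ p) (hq : 0 ≤ q)
    (hs : μ sᶜ ≤ ENNReal.ofReal p) (ht : μ tᶜ ≤ ENNReal.ofReal q) :
    ENNReal.ofReal (1 - p - q) ≤ μ (s ∩ t) := by
  have hcompl : μ (s ∩ t)ᶜ ≤ ENNReal.ofReal p + ENNReal.ofReal q := calc
    μ (s ∩ t)ᶜ = μ (sᶜ ∪ tᶜ) := by rw [Set.compl_inter]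
    _ ≤ μ sᶜ + μ tᶜ := measure_union_le _ _
    _ ≤ ENNReal.ofReal p + ENNReal.ofReal q := add_le_add hs ht
  have hcover : 1 ≤ μ (s ∩ t) + μ (s ∩ t)ᶜ := by
    rw [← measure_univ (μ := μ), ← Set.union_compl_self (s ∩ t)]
    exact measure_union_le _ _
  rw [sub_sub, ENNReal.ofReal_sub _ (add_nonneg hp hq), ENNReal.ofReal_one,
    ENNReal.ofReal_add hp hq, tsub_le_iff_right]
  exact hcover.trans (by gcongr)

lemma gaussianReal_Icc_neg_self {t : ℝ} (ht : 0 ≤ t) :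
    gaussianReal 0 1 (Set.Icc (-t) t) = 2 * gaussianReal 0 1 (Set.Icc 0 t) := by
  have := nullSingletonClass_gaussianReal (μ := 0) one_ne_zero
  have hsymm : gaussianReal 0 1 (Set.Icc (-t) 0) = gaussianReal 0 1 (Set.Icc 0 t) := by
    conv_lhs => rw [← neg_zero, ← gaussianReal_map_neg]
    rw [Measure.map_apply measurable_neg measurableSet_Icc, Set.neg_preimage, Set.neg_Icc,
      neg_neg, neg_neg]
  rw [← Set.Icc_union_Ioc_eq_Icc (neg_nonpos.mpr ht) ht,
    measure_union (Set.disjoint_left.mpr fun _ h₁ h₂ => h₂.1.not_ge h₁.2) measurableSet_Ioc, hsymm,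
    measure_congr Ioc_ae_eq_Icc, two_mul]

lemma measureReal_gaussianReal_lt_abs {t : ℝ} (ht : 0 ≤ t) :
    (gaussianReal 0 1).real {y | t < |y|} = 1 - 2 * erf t := by
  have hcompl : {y : ℝ | t < |y|} = (Set.Icc (-t) t)ᶜ := by
    ext y; simp [← abs_le]
  rw [hcompl, probReal_compl_eq_one_sub measurableSet_Icc, measureReal_def,
    gaussianReal_Icc_neg_self ht, ENNReal.toReal_mul, erf]
  rfl

lemma two_mul_erf_le_one {t : ℝ} (ht : 0 ≤ t) : 2 * erf t ≤ 1 := by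
  linarith [measureReal_gaussianReal_lt_abs ht ▸ measureReal_nonneg (μ := gaussianReal 0 1)]

section

variable {Ω ι : Type*} [MeasurableSpace Ω] {P : Measure Ω}

lemma measure_lt_abs_of_map_eq_gaussianReal {X : Ω → ℝ} (hX : Measurable X)
    (hlaw : P.map X = gaussianReal 0 1) {t : ℝ} (ht : 0 ≤ t) :
    P {ω | t < |X ω|} = ENNReal.ofReal (1 - 2 * erf t) := by
  rw [← measureReal_gaussianReal_lt_abs ht, ofReal_measureReal, ← hlaw,
    Measure.map_apply hX (measurableSet_lt measurable_const measurable_abs)]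
  rfl

lemma measure_exists_lt_abs_le [Fintype ι] {x : ι → Ω → ℝ} (hmeas : ∀ i, Measurable (x i))
    (hgauss : ∀ i, P.map (x i) = gaussianReal 0 1) {t : ℝ} (ht : 0 ≤ t) :
    P {ω | ∃ i, t < |x i ω|} ≤ ENNReal.ofReal (Fintype.card ι * (1 - 2 * erf t)) := by
  rw [Set.ofPred_exists, ENNReal.ofReal_mul (Nat.cast_nonneg _), ENNReal.ofReal_natCast,
    ← nsmul_eq_mul, ← Finset.card_univ, ← Finset.sum_const]
  refine (measure_iUnion_fintype_le P _).trans_eq (Finset.sum_congr rfl fun i _ => ?_)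
  exact measure_lt_abs_of_map_eq_gaussianReal (hmeas i) (hgauss i) ht

lemma integral_exp_mul_sq_gaussianReal {t : ℝ} (ht : t < 1 / 2) :
    ∫ y, exp (t * y ^ 2) ∂gaussianReal 0 1 = (√(1 - 2 * t))⁻¹ := by
  have hdensity : ∀ y : ℝ, gaussianPDFReal 0 1 y • exp (t * y ^ 2)
      = (√(2 * π))⁻¹ * exp (-(1 / 2 - t) * y ^ 2) := by
    intro y
    rw [gaussianPDFReal, smul_eq_mul, mul_assoc, ← exp_add]
    push_cast
    ring_nf
  have hb : 0 < 1 / 2 - t := by linarith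
  simp_rw [integral_gaussianReal_eq_integral_smul one_ne_zero, hdensity]
  rw [integral_const_mul, integral_gaussian, ← sqrt_inv, ← sqrt_mul (by positivity), ← sqrt_inv]
  congr 1
  field_simp

lemma mgf_sq_of_map_eq_gaussianReal {X : Ω → ℝ} (hX : Measurable X)
    (hlaw : P.map X = gaussianReal 0 1) {t : ℝ} (ht : t < 1 / 2) :
    mgf (fun ω => X ω ^ 2) P t = (√(1 - 2 * t))⁻¹ := by
  rw [← integral_exp_mul_sq_gaussianReal ht, ← hlaw, integral_map hX.aemeasurable (by fun_prop)]
  rfl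

lemma measureReal_sum_sq_le_le_exp_mul [IsFiniteMeasure P] [Fintype ι] {x : ι → Ω → ℝ}
    (hmeas : ∀ i, Measurable (x i)) (hindep : iIndepFun x P)
    (hgauss : ∀ i, P.map (x i) = gaussianReal 0 1) (a : ℝ) {t : ℝ} (ht : t ≤ 0) :
    P.real {ω | ∑ i, x i ω ^ 2 ≤ a} ≤ exp (-t * a) * (√(1 - 2 * t))⁻¹ ^ Fintype.card ι := by
  set Y : ι → Ω → ℝ := fun i ω => x i ω ^ 2
  have hYmeas : ∀ i, Measurable (Y i) := fun i => (hmeas i).pow_const 2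
  have hYindep : iIndepFun Y P :=
    hindep.comp (fun _ y => y ^ 2) fun _ => measurable_id.pow_const 2
  have hint : Integrable (fun ω => exp (t * (∑ i, Y i) ω)) P := by
    refine hYindep.integrable_exp_mul_sum hYmeas fun i _ => ?_
    refine Integrable.of_bound (by fun_prop) 1 (ae_of_all _ fun ω => ?_)
    rw [norm_of_nonneg (exp_nonneg _), exp_le_one_iff]
    exact mul_nonpos_of_nonpos_of_nonneg ht (sq_nonneg _)
  calc P.real {ω | ∑ i, x i ω ^ 2 ≤ a} = P.real {ω | (∑ i, Y i) ω ≤ a} := by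
        simp only [Finset.sum_apply, Y]
    _ ≤ exp (-t * a) * mgf (∑ i, Y i) P t := measure_le_le_exp_mul_mgf a ht hint
    _ = exp (-t * a) * (√(1 - 2 * t))⁻¹ ^ Fintype.card ι := by
        rw [hYindep.mgf_sum hYmeas, Finset.prod_congr rfl fun i _ =>
          mgf_sq_of_map_eq_gaussianReal (hmeas i) (hgauss i) (by linarith), Finset.prod_const,
          Finset.card_univ]

lemma measureReal_sum_sq_le_le [IsFiniteMeasure P] [Fintype ι] {x : ι → Ω → ℝ}
    (hmeas : ∀ i, Measurable (x i)) (hindep : iIndepFun x P)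
    (hgauss : ∀ i, P.map (x i) = gaussianReal 0 1) {a : ℝ} (ha : 0 < a)
    (han : a ≤ Fintype.card ι) :
    P.real {ω | ∑ i, x i ω ^ 2 ≤ a} ≤
      (a / Fintype.card ι * exp (1 - a / Fintype.card ι)) ^ ((Fintype.card ι : ℝ) / 2) := by
  set n : ℝ := (Fintype.card ι : ℝ) with hn_def
  have hn : 0 < n := ha.trans_le han
  refine (measureReal_sum_sq_le_le_exp_mul hmeas hindep hgauss a
    (t := (1 - n / a) / 2) ?_).trans_eq ?_
  · linarith [(one_le_div ha).mpr han]
  · rw [show 1 - 2 * ((1 - n / a) / 2) = (a / n)⁻¹ by rw [inv_div]; ring, sqrt_inv, inv_inv,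
      sqrt_eq_rpow, ← rpow_natCast, ← rpow_mul (by positivity), ← hn_def,
      mul_rpow (by positivity) (exp_nonneg _), ← exp_mul, mul_comm]
    congr 2
    · ring
    · field_simp
      ring

lemma measure_sum_sq_lt_le [IsFiniteMeasure P] [Fintype ι] {x : ι → Ω → ℝ}
    (hmeas : ∀ i, Measurable (x i)) (hindep : iIndepFun x P)
    (hgauss : ∀ i, P.map (x i) = gaussianReal 0 1) {a : ℝ} (ha : 0 ≤ a)
    (han : a ≤ Fintype.card ι) :
    P {ω | ∑ i, x i ω ^ 2 < a} ≤ ENNReal.ofReal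
      ((a / Fintype.card ι * exp (1 - a / Fintype.card ι)) ^ ((Fintype.card ι : ℝ) / 2)) := by
  rcases ha.eq_or_lt with rfl | ha
  · have hempty : {ω | ∑ i, x i ω ^ 2 < 0} = ∅ :=
      Set.eq_empty_of_forall_notMem fun ω h => (Set.mem_ofPred_eq ▸ h).not_ge (by positivity)
    simp [hempty]
  · calc P {ω | ∑ i, x i ω ^ 2 < a} ≤ P {ω | ∑ i, x i ω ^ 2 ≤ a} :=
          measure_mono (Set.ofPred_subset_ofPred.mpr fun ω => le_of_lt)
      _ = ENNReal.ofReal (P.real {ω | ∑ i, x i ω ^ 2 ≤ a}) := (ofReal_measureReal).symm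
      _ ≤ _ := ENNReal.ofReal_le_ofReal (measureReal_sum_sq_le_le hmeas hindep hgauss ha han)

end

/-- for `s i = |x i|` with `x i` i.i.d. standard Gaussians,
`r_t ≥ 1` and `η ≥ √((r_t−1)/(m−1))` positive, the probability that both
`∑ sᵢ² ≥ (r_t−1)/η²` and `maxᵢ sᵢ ≤ 1/η` hold is at least
`1 − ((r_t−1)/(η²(m−1)) e^{1−(r_t−1)/(η²(m−1))})^{(m−1)/2} − (m−1)(1 − 2 erf(1/η))`. -/
theorem acceptance_probability_bound {Ω : Type*} [MeasurableSpace Ω]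
    (P : Measure Ω) [IsProbabilityMeasure P]
    (m : ℕ) (hm : 2 ≤ m) (x : Fin (m - 1) → Ω → ℝ)
    (hmeas : ∀ i, Measurable (x i))
    (hindep : iIndepFun x P)
    (hgauss : ∀ i, P.map (x i) = gaussianReal 0 1)
    (rt η : ℝ) (hrt : 1 ≤ rt) (hη : 0 < η)
    (hηlb : Real.sqrt ((rt - 1) / ((m : ℝ) - 1)) ≤ η) :
    ENNReal.ofReal
        (1 - ((rt - 1) / (η ^ 2 * ((m : ℝ) - 1)) *
            Real.exp (1 - (rt - 1) / (η ^ 2 * ((m : ℝ) - 1)))) ^ (((m : ℝ) - 1) / 2)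
          - ((m : ℝ) - 1) * (1 - 2 * erf (1 / η))) ≤
      P {ω | (rt - 1) / η ^ 2 ≤ ∑ i, |x i ω| ^ 2 ∧ ∀ i, |x i ω| ≤ 1 / η} := by
  have hcard : (Fintype.card (Fin (m - 1)) : ℝ) = (m : ℝ) - 1 := by
    rw [Fintype.card_fin, Nat.cast_sub (by omega), Nat.cast_one]
  have hm1 : (0 : ℝ) < m - 1 := by
    rw [← hcard, Nat.cast_pos, Fintype.card_fin]; omega
  have ha : 0 ≤ (rt - 1) / η ^ 2 := div_nonneg (by linarith) (sq_nonneg η)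
  have han : (rt - 1) / η ^ 2 ≤ (m : ℝ) - 1 := by
    rw [sqrt_le_left hη.le, div_le_iff₀ hm1] at hηlb
    rw [div_le_iff₀ (by positivity)]
    linarith
  have hchi := measure_sum_sq_lt_le hmeas hindep hgauss ha (hcard ▸ han)
  have htail := measure_exists_lt_abs_le hmeas hgauss (one_div_nonneg.mpr hη.le)
  rw [hcard, div_div] at hchi
  rw [hcard] at htail
  rw [Set.ofPred_and]
  refine ofReal_one_sub_sub_le_measure_inter (by positivity)
    (mul_nonneg hm1.le (by linarith [two_mul_erf_le_one (one_div_nonneg.mpr hη.le)]))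
    ((measure_mono fun ω h => ?_).trans hchi) ((measure_mono fun ω h => ?_).trans htail)
  · simpa only [Set.mem_compl_iff, Set.mem_ofPred_eq, not_le, sq_abs] using h
  · simpa only [Set.mem_compl_iff, Set.mem_ofPred_eq, not_le, not_forall] using h
end
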